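/- The lift Λ of the VI-SLAM dynamics is invariant with respect to the reference-frame action α: for all ξ ∈ 𝒯, all inputs (Ω, a) ∈ ℝ³ × ℝ³, and all S ∈ SE_{e₃}(3), Λ(α(S, ξ), (Ω, a)) = Λ(ξ, (Ω, a)). -/

import Mathlib

noncomputable section
open Matrix

abbrev Mat3 := Matrix (Fin 3) (Fin 3) ℝ
abbrev Vec3 := EuclideanSpace ℝ (Fin 3)
abbrev Vec6 := EuclideanSpace ℝ (Fin 6)

def SO3 (R : Mat3) : Prop := Rᵀ * R = 1 ∧ R.det = 1

def e3 : Vec3 := WithLp.toLp 2 (![0, 0, 1] : Fin 3 → ℝ)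

def mulv (M : Mat3) (v : Vec3) : Vec3 := WithLp.toLp 2 (M.mulVec v)

/-- The cross product on `ℝ³`. -/
def crossV (u v : Vec3) : Vec3 := WithLp.toLp 2 (crossProduct u v)

abbrev SE3 := Mat3 × Vec3
def SE3.mul (P Q : SE3) : SE3 := (P.1 * Q.1, P.2 + mulv P.1 Q.2)
def SE3.inv (P : SE3) : SE3 := (P.1ᵀ, -(mulv P.1ᵀ P.2))
def SE3.act (P : SE3) (p : Vec3) : Vec3 := mulv P.1 p + P.2

/-- Membership in `SE_{e₃}(3)`. -/
def SEe3 (S : SE3) : Prop := SO3 S.1 ∧ mulv S.1 e3 = e3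

structure VIState (n : ℕ) where
  P : SE3            -- pose of the IMU `(R_B, x_B)`
  v : Vec3           -- linear velocity `v_B`
  b : Vec6           -- IMU bias `b_B`
  T : SE3            -- camera extrinsics `(R_T, x_T)`
  p : Fin n → Vec3   -- landmark positions

def VIState.mem {n : ℕ} (ξ : VIState n) : Prop :=
  SO3 ξ.P.1 ∧ SO3 ξ.T.1 ∧ ∀ i, SE3.act (SE3.inv (SE3.mul ξ.P ξ.T)) (ξ.p i) ≠ 0

/-- The reference-frame action `α(S, ξ) := (S⁻¹P_B, R_Sᵀ v_B, b_B, T, (S⁻¹ p_i))`. -/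
def alphaAct {n : ℕ} (S : SE3) (ξ : VIState n) : VIState n :=
  ⟨SE3.mul (SE3.inv S) ξ.P, mulv S.1ᵀ ξ.v, ξ.b, ξ.T,
    fun i => SE3.act (SE3.inv S) (ξ.p i)⟩

/-- The lift `Λ(ξ, (Ω, a)) = ((Ω, R_Bᵀ v_B, a), 0, (Ω_C, v_C),
((Ω_C + q_i^× v_C/|q_i|², q_iᵀ v_C/|q_i|²))_i)` with `q_i = (P_B T)⁻¹ p_i`,
`Ω_C = R_Tᵀ Ω` and `v_C = R_Tᵀ(Ω × x_T + R_Bᵀ v_B)`. -/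
def Lambda {n : ℕ} (ξ : VIState n) (Ω a : Vec3) :
    (Vec3 × Vec3 × Vec3) × Vec6 × (Vec3 × Vec3) × (Fin n → Vec3 × ℝ) :=
  let q : Fin n → Vec3 := fun i => SE3.act (SE3.inv (SE3.mul ξ.P ξ.T)) (ξ.p i)
  let ΩC : Vec3 := mulv ξ.T.1ᵀ Ω
  let vC : Vec3 := mulv ξ.T.1ᵀ (crossV Ω ξ.T.2 + mulv ξ.P.1ᵀ ξ.v)
  ((Ω, mulv ξ.P.1ᵀ ξ.v, a), 0, (ΩC, vC),
    fun i => (ΩC + (‖q i‖ ^ 2)⁻¹ • crossV (q i) vC, (q i ⬝ᵥ vC) / ‖q i‖ ^ 2))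

/-! Λ sees the state only through the body-frame velocity `R_Bᵀ v_B`, the extrinsics `T` and the
landmarks in the camera frame `q_i = (P_B T)⁻¹ p_i`. Moving the world frame by `S` leaves all three
unchanged: `S⁻¹` cancels in `(S⁻¹ P_B T)⁻¹ (S⁻¹ p_i)` and `R_S` cancels in `(R_Sᵀ R_B)ᵀ (R_Sᵀ v_B)`. -/

lemma mulv_add (M : Mat3) (x y : Vec3) : mulv M (x + y) = mulv M x + mulv M y := by
  simp [mulv, Matrix.mulVec_add]

lemma mulv_neg (M : Mat3) (x : Vec3) : mulv M (-x) = -mulv M x := by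
  simp [mulv, Matrix.mulVec_neg]

lemma mulv_mulv (M N : Mat3) (x : Vec3) : mulv M (mulv N x) = mulv (M * N) x := by
  simp [mulv, Matrix.mulVec_mulVec]

lemma mulv_one (x : Vec3) : mulv 1 x = x := by
  simp [mulv]

lemma SO3.mul_transpose_self {R : Mat3} (hR : SO3 R) : R * Rᵀ = 1 :=
  mul_eq_one_comm.mp hR.1

lemma SE3.mul_assoc (P Q U : SE3) : SE3.mul (SE3.mul P Q) U = SE3.mul P (SE3.mul Q U) := by
  simp only [SE3.mul, Matrix.mul_assoc, mulv_add, mulv_mulv, add_assoc]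

lemma SE3.act_act_inv {S : SE3} (hS : S.1 * S.1ᵀ = 1) (p : Vec3) :
    SE3.act S (SE3.act (SE3.inv S) p) = p := by
  simp only [SE3.act, SE3.inv, mulv_add, mulv_neg, mulv_mulv, hS, mulv_one]
  abel

lemma SE3.act_inv_inv_mul {S : SE3} (hS : S.1 * S.1ᵀ = 1) (Q : SE3) (p : Vec3) :
    SE3.act (SE3.inv (SE3.mul (SE3.inv S) Q)) p = SE3.act (SE3.inv Q) (SE3.act S p) := by
  simp only [SE3.act, SE3.inv, SE3.mul, Matrix.transpose_mul, Matrix.transpose_transpose,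
    mulv_add, mulv_neg, mulv_mulv, Matrix.mul_assoc, hS, Matrix.mul_one]
  abel

lemma alphaAct_body_velocity {S : SE3} (hS : S.1 * S.1ᵀ = 1) {n : ℕ} (ξ : VIState n) :
    mulv (alphaAct S ξ).P.1ᵀ (alphaAct S ξ).v = mulv ξ.P.1ᵀ ξ.v := by
  simp only [alphaAct, SE3.mul, SE3.inv, Matrix.transpose_mul, Matrix.transpose_transpose,
    mulv_mulv, Matrix.mul_assoc, hS, Matrix.mul_one]

lemma alphaAct_landmark_in_camera {S : SE3} (hS : S.1 * S.1ᵀ = 1) {n : ℕ} (ξ : VIState n)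
    (i : Fin n) :
    SE3.act (SE3.inv (SE3.mul (alphaAct S ξ).P ξ.T)) ((alphaAct S ξ).p i) =
      SE3.act (SE3.inv (SE3.mul ξ.P ξ.T)) (ξ.p i) := by
  simp only [alphaAct, SE3.mul_assoc, SE3.act_inv_inv_mul hS, SE3.act_act_inv hS]

theorem Lambda_invariant_under_alpha_general (n : ℕ)
    (ξ : VIState n) (Ω a : Vec3) (S : SE3) (hS : SEe3 S) :
    Lambda (alphaAct S ξ) Ω a = Lambda ξ Ω a := by
  have hRS : S.1 * S.1ᵀ = 1 := hS.1.mul_transpose_self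
  have hT : (alphaAct S ξ).T = ξ.T := rfl
  simp only [Lambda, hT, alphaAct_body_velocity hRS, alphaAct_landmark_in_camera hRS]

/-- The lift `Λ` of the VI-SLAM dynamics is invariant with respect to
the reference-frame action `α`: `Λ(α(S, ξ), (Ω, a)) = Λ(ξ, (Ω, a))` for all `ξ ∈ 𝒯`,
inputs `(Ω, a)` and `S ∈ SE_{e₃}(3)`. -/
theorem Lambda_invariant_under_alpha (n : ℕ) (hn : 1 ≤ n)
    (ξ : VIState n) (Ω a : Vec3) (S : SE3) (hξ : ξ.mem) (hS : SEe3 S) :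
    Lambda (alphaAct S ξ) Ω a = Lambda ξ Ω a :=
  Lambda_invariant_under_alpha_general n ξ Ω a S hS
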